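/- With G, g, A as above, for any η', η'' ∈ A₁ and Y ∈ g₁: (1 + η'Y)·(1 + η''Y) = (1 + η''η' Y^⟨2⟩)·(1 + (η' + η'')Y), where Y^⟨2⟩ ∈ g₀ is the 2-operation applied to Y. -/
import Mathlib


open scoped TensorProduct

/-- A commutative superalgebra over a commutative ring `k`. -/
class SuperAlgebra (k A : Type*) [CommRing k] [Ring A] [Algebra k A] where
  grading : ZMod 2 → Submodule k A
  one_mem : (1 : A) ∈ grading 0
  mul_mem : ∀ {i j : ZMod 2} {x y : A}, x ∈ grading i → y ∈ grading j → x * y ∈ grading (i + j)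
  isInternal : DirectSum.IsInternal grading
  supercomm : ∀ {i j : ZMod 2} {x y : A}, x ∈ grading i → y ∈ grading j →
    x * y = ((-1 : ℤ) ^ (i.val * j.val)) • (y * x)
  odd_sq : ∀ {z : A}, z ∈ grading 1 → z * z = 0

/-- The convolution product on linear maps from a coalgebra `H` to an algebra `A` :
`f ⋆ g := m_A ∘ (f ⊗ g) ∘ Δ`.  For `H = O(G)` this is the group law of `G(A)`. -/
noncomputable def conv {k : Type*} [CommRing k] {H : Type*} [AddCommGroup H] [Module k H]
    [Coalgebra k H] {A : Type*} [Ring A] [Algebra k A] (f g : H →ₗ[k] A) : H →ₗ[k] A :=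
  LinearMap.mul' k A ∘ₗ TensorProduct.map f g ∘ₗ Coalgebra.comul (R := k)

/-- The element `(1 + aY)` of `Hom(O(G), A)` attached to a coefficient `a ∈ A` and a
functional `Y : O(G) → k` (e.g. a tangent vector `Y ∈ g` paired with `O(G)`) :
`f ↦ ε(f)·1_A + a·Y(f)`. -/
noncomputable def oneAdd {k : Type*} [CommRing k] {H : Type*} [AddCommGroup H] [Module k H]
    [Coalgebra k H] {A : Type*} [Ring A] [Algebra k A] (a : A) (Y : H →ₗ[k] k) : H →ₗ[k] A :=
  Algebra.linearMap k A ∘ₗ Coalgebra.counit (R := k)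
    + LinearMap.mulLeft k a ∘ₗ Algebra.linearMap k A ∘ₗ Y

/-- A `k`-valued `ε`-derivation of `H` (a tangent vector at the identity). -/
def IsEpsDeriv {k : Type*} [CommRing k] {H : Type*} [Ring H] [Algebra k H] [Coalgebra k H]
    (Y : H →ₗ[k] k) : Prop :=
  ∀ f g : H, Y (f * g) = Y f * Coalgebra.counit (R := k) g + Coalgebra.counit (R := k) f * Y g


section helpers

variable {k : Type*} [CommRing k] {H : Type*} [AddCommGroup H] [Module k H]
  [Coalgebra k H] {A : Type*} [Ring A] [Algebra k A]

lemma conv_add_left (f f' g : H →ₗ[k] A) :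
    conv (f + f') g = conv f g + conv f' g := by
  simp [conv, TensorProduct.map_add_left, LinearMap.add_comp, LinearMap.comp_add]

lemma conv_add_right (f g g' : H →ₗ[k] A) :
    conv f (g + g') = conv f g + conv f g' := by
  simp [conv, TensorProduct.map_add_right, LinearMap.add_comp, LinearMap.comp_add]

lemma conv_counit_left (h : H →ₗ[k] A) :
    conv (Algebra.linearMap k A ∘ₗ Coalgebra.counit (R := k)) h = h := by
  ext f
  have h1 : TensorProduct.map ((Algebra.linearMap k A) ∘ₗ Coalgebra.counit (R := k)) h
      = TensorProduct.map (Algebra.linearMap k A) h ∘ₗ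
        TensorProduct.map (Coalgebra.counit (R := k) (A := H)) (LinearMap.id : H →ₗ[k] H) := by
    apply TensorProduct.ext'
    intro x y
    rfl
  have h2 : TensorProduct.map (Coalgebra.counit (R := k) (A := H)) (LinearMap.id : H →ₗ[k] H)
      (Coalgebra.comul f) = (1 : k) ⊗ₜ[k] f := Coalgebra.rTensor_counit_comul f
  simp [conv, h1, h2]

lemma conv_counit_right (h : H →ₗ[k] A) :
    conv h (Algebra.linearMap k A ∘ₗ Coalgebra.counit (R := k)) = h := by
  ext f
  have h1 : TensorProduct.map h ((Algebra.linearMap k A) ∘ₗ Coalgebra.counit (R := k))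
      = TensorProduct.map h (Algebra.linearMap k A) ∘ₗ
        TensorProduct.map (LinearMap.id : H →ₗ[k] H) (Coalgebra.counit (R := k) (A := H)) := by
    apply TensorProduct.ext'
    intro x y
    rfl
  have h2 : TensorProduct.map (LinearMap.id : H →ₗ[k] H) (Coalgebra.counit (R := k) (A := H))
      (Coalgebra.comul f) = f ⊗ₜ[k] (1 : k) := Coalgebra.lTensor_counit_comul f
  simp [conv, h1, h2]

lemma conv_mulLeft (a b : A) (Y Z : H →ₗ[k] k) :
    conv (LinearMap.mulLeft k a ∘ₗ Algebra.linearMap k A ∘ₗ Y)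
        (LinearMap.mulLeft k b ∘ₗ Algebra.linearMap k A ∘ₗ Z)
      = LinearMap.mulLeft k (a * b) ∘ₗ Algebra.linearMap k A ∘ₗ conv (A := k) Y Z := by
  have hmain : LinearMap.mul' k A ∘ₗ TensorProduct.map
        (LinearMap.mulLeft k a ∘ₗ Algebra.linearMap k A ∘ₗ Y)
        (LinearMap.mulLeft k b ∘ₗ Algebra.linearMap k A ∘ₗ Z)
      = (LinearMap.mulLeft k (a * b) ∘ₗ Algebra.linearMap k A) ∘ₗ
        (LinearMap.mul' k k ∘ₗ TensorProduct.map Y Z) := by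
    apply TensorProduct.ext'
    intro x y
    simp only [LinearMap.comp_apply, TensorProduct.map_tmul, LinearMap.mul'_apply,
      LinearMap.mulLeft_apply, Algebra.linearMap_apply, map_mul]
    rw [mul_assoc, mul_assoc, ← mul_assoc (algebraMap k A (Y x)) b,
      Algebra.commutes (Y x) b, mul_assoc]
  ext f
  simpa [conv, LinearMap.comp_apply] using LinearMap.congr_fun hmain (Coalgebra.comul f)

lemma mulLeft_add' (a b : A) : LinearMap.mulLeft k (a + b)
    = LinearMap.mulLeft k a + LinearMap.mulLeft k b := by
  ext x; simp [add_mul]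

end helpers

/-- With `G` an affine `k`-supergroup (`H = O(G)` a super bialgebra,
`G(A) ⊆ Hom_k(H, A)` with convolution product) and `A` a commutative `k`-superalgebra :
for any odd `η', η'' ∈ A₁` and an odd tangent vector `Y ∈ g₁` (an odd `ε`-derivation
`H → k`), with `Y^⟨2⟩ ∈ g₀` its `2`-operation — dually `Y^⟨2⟩ = −(Y ⋆ Y)` — one has in
`G(A)` : `(1 + η'Y)·(1 + η''Y) = (1 + η''η' Y^⟨2⟩)·(1 + (η' + η'')Y)`. -/
theorem statement9 {k H A : Type*} [CommRing k] [Ring H] [Bialgebra k H] [SuperAlgebra k H]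
    [Ring A] [Algebra k A] [SuperAlgebra k A]
    (η' η'' : A) (hη' : η' ∈ SuperAlgebra.grading (k := k) (A := A) 1)
    (hη'' : η'' ∈ SuperAlgebra.grading (k := k) (A := A) 1)
    (Y S : H →ₗ[k] k) (hY : IsEpsDeriv Y)
    (hYodd : ∀ f ∈ SuperAlgebra.grading (k := k) (A := H) 0, Y f = 0)
    (hS : S = -conv (A := k) Y Y) :
    conv (oneAdd η' Y) (oneAdd η'' Y)
      = conv (oneAdd (η'' * η') S) (oneAdd (η' + η'') Y) := by
  have hcomm : η' * η'' = -(η'' * η') := by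
    have hv : (1 : ZMod 2).val = 1 := rfl
    have h := SuperAlgebra.supercomm (k := k) hη' hη''
    rw [hv] at h
    simpa using h
  have hsq' : η' * η' = 0 := SuperAlgebra.odd_sq (k := k) hη'
  have hsq'' : η'' * η'' = 0 := SuperAlgebra.odd_sq (k := k) hη''
  have hzero : (η'' * η') * (η' + η'') = 0 := by
    have h2 : η'' * η' * η'' = 0 := by
      rw [mul_assoc, hcomm, mul_neg, ← mul_assoc, hsq'', zero_mul, neg_zero]
    rw [mul_add, mul_assoc η'' η' η', hsq', mul_zero, h2, add_zero]
  have expand : ∀ (a : A) (T : H →ₗ[k] k), oneAdd a T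
      = (Algebra.linearMap k A ∘ₗ Coalgebra.counit (R := k))
        + (LinearMap.mulLeft k a ∘ₗ Algebra.linearMap k A ∘ₗ T) := fun _ _ => rfl
  rw [expand, expand, expand, expand]
  simp only [conv_add_left, conv_add_right, conv_counit_left, conv_counit_right, conv_mulLeft]
  rw [hzero, hS]
  ext f
  simp only [LinearMap.add_apply, LinearMap.comp_apply, LinearMap.mulLeft_apply,
    Algebra.linearMap_apply, LinearMap.neg_apply, map_neg, mul_neg, zero_mul,
    LinearMap.mulLeft_zero_eq_zero, LinearMap.zero_comp, LinearMap.zero_apply, add_zero]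
  rw [hcomm]
  simp only [neg_mul, mul_neg, neg_neg, add_mul]
  abel
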